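/- arXiv:1909.00782 — 2 statements merged into one kernel-verified Lean document; each statement's English description precedes it below -/
import Mathlib

section
/- The function f(α) = ∫₀^α cos(s)·(sin s)^{n−2} ds / ∫₀^α (sin s)^{n−2} ds is strictly decreasing on (0, π/2], and there is a constant c₂ > 0 depending only on n such that f′(α) ≤ −c₂ for all α ∈ [π/3, π/2]. -/
open MeasureTheory Metric Set Filter
open scoped Pointwise ENNReal Topology NNReal

noncomputable section

abbrev Eucl (n : ℕ) := EuclideanSpace ℝ (Fin n)

noncomputable def suppFn {n : ℕ} (K : Set (Eucl n)) (u : Eucl n) : ℝ :=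
  sSup ((fun x => (inner ℝ x u : ℝ)) '' K)

noncomputable def ballVol (m : ℕ) : ℝ := (volume (ball (0 : Eucl m) 1)).toReal

noncomputable def intrinsicOne {n : ℕ} (K : Set (Eucl n)) : ℝ :=
  (ballVol (n-1))⁻¹ * ∫ u in sphere (0 : Eucl n) 1, suppFn K u ∂(μH[(n:ℝ)-1])

noncomputable def circumradius {n : ℕ} (K : Set (Eucl n)) : ℝ :=
  sInf {r : ℝ | 0 ≤ r ∧ ∃ c, K ⊆ closedBall c r}

noncomputable def affDim {n : ℕ} (K : Set (Eucl n)) : ℕ :=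
  Module.finrank ℝ (affineSpan ℝ K).direction

noncomputable def projOrth {n : ℕ} (e x : Eucl n) : Eucl n := x - (inner ℝ x e : ℝ) • e

noncomputable def maxInradius {n : ℕ} (e : Eucl n) (M : Set (Eucl n)) : ℝ :=
  sSup {ρ : ℝ | 0 ≤ ρ ∧ ∃ c : Eucl n, (inner ℝ c e : ℝ) = 0 ∧
    closedBall c ρ ∩ {x | (inner ℝ x e : ℝ) = 0} ⊆ projOrth e '' M}

def IsSurfaceMeasure {n : ℕ} (M : Set (Eucl n)) (μ : Measure (Eucl n)) : Prop :=
  μ (sphere (0 : Eucl n) 1)ᶜ = 0 ∧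
  ∀ L : Set (Eucl n), IsCompact L → Convex ℝ L → L.Nonempty →
    Tendsto (fun t : ℝ => ((volume (M + t • L)).toReal - (volume M).toReal) / t)
      (𝓝[>] (0:ℝ)) (𝓝 (∫ u, suppFn L u ∂μ))

def cap {n : ℕ} (z : Eucl n) (α : ℝ) : Set (Eucl n) :=
  {x ∈ sphere (0 : Eucl n) 1 | Real.cos α ≤ (inner ℝ x z : ℝ)}

def sphArc {n : ℕ} (z x : Eucl n) : Set (Eucl n) :=
  {u | ∃ a b : ℝ, 0 ≤ a ∧ 0 ≤ b ∧ 0 < a + b ∧ u = ‖a • z + b • x‖⁻¹ • (a • z + b • x)}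

def SphStarshaped {n : ℕ} (z : Eucl n) (P : Set (Eucl n)) : Prop :=
  z ∈ P ∧ -z ∉ P ∧ ∀ x ∈ P, sphArc z x ⊆ P

lemma aux_main (m : ℕ) :
    StrictAntiOn
      (fun α : ℝ => (∫ s in (0:ℝ)..α, Real.cos s * (Real.sin s) ^ m) /
        (∫ s in (0:ℝ)..α, (Real.sin s) ^ m))
      (Set.Ioc 0 (Real.pi / 2)) ∧
    ∃ c₂ : ℝ, 0 < c₂ ∧
      ∀ α ∈ Set.Icc (Real.pi / 3) (Real.pi / 2),
        deriv (fun α : ℝ => (∫ s in (0:ℝ)..α, Real.cos s * (Real.sin s) ^ m) /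
            (∫ s in (0:ℝ)..α, (Real.sin s) ^ m)) α ≤ -c₂ := by
  have hc1 : Continuous fun s : ℝ => Real.cos s * Real.sin s ^ m :=
    Real.continuous_cos.mul (Real.continuous_sin.pow m)
  have hc2 : Continuous fun s : ℝ => Real.sin s ^ m := Real.continuous_sin.pow m
  set N : ℝ → ℝ := fun α => ∫ s in (0:ℝ)..α, Real.cos s * Real.sin s ^ m with hNdef
  set D : ℝ → ℝ := fun α => ∫ s in (0:ℝ)..α, Real.sin s ^ m with hDdef
  have hNcont : Continuous N :=
    intervalIntegral.continuous_primitive (fun a b => (hc1.intervalIntegrable a b)) 0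
  have hDcont : Continuous D :=
    intervalIntegral.continuous_primitive (fun a b => (hc2.intervalIntegrable a b)) 0
  have hDpos : ∀ α ∈ Set.Ioc (0:ℝ) (Real.pi/2), 0 < D α := by
    intro α hα
    refine intervalIntegral.intervalIntegral_pos_of_pos_on (hc2.intervalIntegrable 0 α)
      (fun x hx => ?_) hα.1
    have : 0 < Real.sin x := Real.sin_pos_of_pos_of_lt_pi hx.1
      (lt_of_lt_of_le hx.2 (le_trans hα.2 (by linarith [Real.pi_pos])))
    positivity
  -- numerator sign: cos α * D α - N α < 0
  have hnum : ∀ α ∈ Set.Ioc (0:ℝ) (Real.pi/2), Real.cos α * D α - N α < 0 := by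
    intro α hα
    have key : 0 < ∫ s in (0:ℝ)..α, (Real.cos s - Real.cos α) * Real.sin s ^ m := by
      refine intervalIntegral.intervalIntegral_pos_of_pos_on
        (((Real.continuous_cos.sub continuous_const).mul hc2).intervalIntegrable 0 α)
        (fun x hx => ?_) hα.1
      have hxpi : x < Real.pi := lt_of_lt_of_le hx.2 (le_trans hα.2 (by linarith [Real.pi_pos]))
      have hs : 0 < Real.sin x := Real.sin_pos_of_pos_of_lt_pi hx.1 hxpi
      have hcos : Real.cos α < Real.cos x := by
        have h2 := hα.2
        exact Real.cos_lt_cos_of_nonneg_of_le_pi (le_of_lt hx.1)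
          (by linarith [Real.pi_pos]) hx.2
      have := sub_pos.mpr hcos
      positivity
    have hsplit : (∫ s in (0:ℝ)..α, (Real.cos s - Real.cos α) * Real.sin s ^ m)
        = N α - Real.cos α * D α := by
      have : ∀ s, (Real.cos s - Real.cos α) * Real.sin s ^ m
          = Real.cos s * Real.sin s ^ m - Real.cos α * (Real.sin s ^ m) := by
        intro s; ring
      simp_rw [this]
      rw [intervalIntegral.integral_sub (hc1.intervalIntegrable 0 α)
        ((show Continuous fun s : ℝ => Real.cos α * Real.sin s ^ m from continuous_const.mul hc2).intervalIntegrable 0 α),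
        intervalIntegral.integral_const_mul]
    rw [hsplit] at key
    linarith
  -- derivative
  set g : ℝ → ℝ := fun α =>
    (Real.cos α * Real.sin α ^ m * D α - N α * Real.sin α ^ m) / (D α) ^ 2 with hgdef
  have hderiv : ∀ α ∈ Set.Ioc (0:ℝ) (Real.pi/2),
      HasDerivAt (fun α => N α / D α) (g α) α := by
    intro α hα
    have hN : HasDerivAt N (Real.cos α * Real.sin α ^ m) α :=
      intervalIntegral.integral_hasDerivAt_right (hc1.intervalIntegrable 0 α)
        hc1.aestronglyMeasurable.stronglyMeasurableAtFilter hc1.continuousAt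
    have hD : HasDerivAt D (Real.sin α ^ m) α :=
      intervalIntegral.integral_hasDerivAt_right (hc2.intervalIntegrable 0 α)
        hc2.aestronglyMeasurable.stronglyMeasurableAtFilter hc2.continuousAt
    exact hN.div hD (ne_of_gt (hDpos α hα))
  have hgneg : ∀ α ∈ Set.Ioc (0:ℝ) (Real.pi/2), g α < 0 := by
    intro α hα
    have hs : 0 < Real.sin α := Real.sin_pos_of_pos_of_lt_pi hα.1
      (lt_of_le_of_lt hα.2 (by linarith [Real.pi_pos]))
    have h1 : Real.cos α * Real.sin α ^ m * D α - N α * Real.sin α ^ m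
        = Real.sin α ^ m * (Real.cos α * D α - N α) := by ring
    have h2 : Real.sin α ^ m * (Real.cos α * D α - N α) < 0 :=
      mul_neg_of_pos_of_neg (by positivity) (hnum α hα)
    rw [hgdef]
    exact div_neg_of_neg_of_pos (by rw [h1]; exact h2) (pow_pos (hDpos α hα) 2)
  constructor
  · apply strictAntiOn_of_deriv_neg (convex_Ioc 0 (Real.pi/2))
    · exact (hNcont.continuousOn).div (hDcont.continuousOn)
        (fun x hx => ne_of_gt (hDpos x hx))
    · intro x hx
      rw [interior_Ioc] at hx
      have hx' : x ∈ Set.Ioc (0:ℝ) (Real.pi/2) := ⟨hx.1, le_of_lt hx.2⟩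
      rw [(hderiv x hx').deriv]
      exact hgneg x hx'
  · have hsub : Set.Icc (Real.pi/3) (Real.pi/2) ⊆ Set.Ioc (0:ℝ) (Real.pi/2) := by
      intro x hx
      exact ⟨lt_of_lt_of_le (by linarith [Real.pi_pos]) hx.1, hx.2⟩
    have hgcont : ContinuousOn g (Set.Icc (Real.pi/3) (Real.pi/2)) := by
      apply ContinuousOn.div
      · exact (((Real.continuous_cos.mul (Real.continuous_sin.pow m)).mul hDcont).sub
          (hNcont.mul (Real.continuous_sin.pow m))).continuousOn
      · exact (hDcont.pow 2).continuousOn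
      · intro x hx
        have := hDpos x (hsub hx)
        positivity
    have hne : (Set.Icc (Real.pi/3) (Real.pi/2)).Nonempty :=
      ⟨Real.pi/3, by constructor <;> linarith [Real.pi_pos]⟩
    obtain ⟨x₀, hx₀, hmax⟩ := isCompact_Icc.exists_isMaxOn hne hgcont
    refine ⟨-g x₀, by linarith [hgneg x₀ (hsub hx₀)], fun α hα => ?_⟩
    rw [(hderiv α (hsub hα)).deriv]
    simpa using hmax hα


/-- The weighted cosine average f is strictly decreasing on (0,π/2], with derivative
uniformly bounded away from 0 on [π/3,π/2]. -/
theorem cosine_average_strictAnti (n : ℕ) (hn : 2 ≤ n) :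
    StrictAntiOn
      (fun α : ℝ => (∫ s in (0:ℝ)..α, Real.cos s * (Real.sin s) ^ (n - 2)) /
        (∫ s in (0:ℝ)..α, (Real.sin s) ^ (n - 2)))
      (Set.Ioc 0 (Real.pi / 2)) ∧
    ∃ c₂ : ℝ, 0 < c₂ ∧
      ∀ α ∈ Set.Icc (Real.pi / 3) (Real.pi / 2),
        deriv (fun α : ℝ => (∫ s in (0:ℝ)..α, Real.cos s * (Real.sin s) ^ (n - 2)) /
            (∫ s in (0:ℝ)..α, (Real.sin s) ^ (n - 2))) α ≤ -c₂ :=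
  aux_main (n - 2)
end
end

section
/- Let K be a convex body in ℝⁿ with circumradius R(K) = 1 and suppose V₁(K) ≤ 2 + ε with ε ∈ [0, min{c₃, 1/2}], where c₃ is the constant from the diameter bound V₁(K) ≥ 2 + c₃√η when diam K ≤ 2−η. If [y₁,y₂] is a longest segment contained in K, then ‖y₁−y₂‖ ≥ 2 − (ε/c₃)², and every point y ∈ K is at distance at most √((3 + 3c₃^{−2})ε) from the segment [y₁,y₂]. -/
open MeasureTheory Metric Set Filter
open scoped Pointwise ENNReal Topology NNReal

noncomputable section

section AuxAlmostSegment

variable {n : ℕ}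

private lemma aux_ballVol_pos (m : ℕ) : 0 < ballVol m :=
  ENNReal.toReal_pos (measure_ball_pos volume _ one_pos).ne' measure_ball_lt_top.ne

private lemma aux_bddBelow (K : Set (Eucl n)) :
    BddBelow {r : ℝ | 0 ≤ r ∧ ∃ c, K ⊆ closedBall c r} := ⟨0, fun _ hr => hr.1⟩

private lemma aux_diam_le {K : Set (Eucl n)} (hco : IsCompact K) (hR : circumradius K = 1) :
    ∀ x ∈ K, ∀ y ∈ K, ‖x - y‖ ≤ 2 := by
  intro x hx y hy
  obtain ⟨r, hr⟩ := hco.isBounded.subset_closedBall (0 : Eucl n)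
  have hne : {r : ℝ | 0 ≤ r ∧ ∃ c, K ⊆ closedBall c r}.Nonempty :=
    ⟨max r 0, le_max_right _ _, 0, hr.trans (closedBall_subset_closedBall (le_max_left _ _))⟩
  have hlb : ‖x - y‖ / 2 ≤ circumradius K := by
    unfold circumradius
    refine le_csInf hne ?_
    rintro s ⟨hs0, c, hc⟩
    have h1 := hc hx
    have h2 := hc hy
    rw [mem_closedBall, dist_eq_norm] at h1 h2
    have h3 : ‖x - y‖ ≤ ‖x - c‖ + ‖y - c‖ := by
      calc ‖x - y‖ = ‖(x - c) - (y - c)‖ := by rw [sub_sub_sub_cancel_right]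
        _ ≤ ‖x - c‖ + ‖y - c‖ := norm_sub_le _ _
    linarith
  rw [hR] at hlb
  linarith

private lemma aux_isCompact_segment (x y : Eucl n) : IsCompact (segment ℝ x y) := by
  rw [segment_eq_image]
  exact isCompact_Icc.image (by fun_prop)

private lemma aux_circum_seg {e : Eucl n} (he : ‖e‖ = 1) :
    circumradius (segment ℝ (-e) e) = 1 := by
  have hmem1 : (1 : ℝ) ∈ {r : ℝ | 0 ≤ r ∧ ∃ c, segment ℝ (-e) e ⊆ closedBall c r} := by
    refine ⟨zero_le_one, 0, ?_⟩
    apply (convex_closedBall (0 : Eucl n) 1).segment_subset <;>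
      simp [mem_closedBall, dist_eq_norm, he]
  unfold circumradius
  apply le_antisymm
  · exact csInf_le (aux_bddBelow _) hmem1
  · refine le_csInf ⟨1, hmem1⟩ ?_
    rintro s ⟨hs0, c, hc⟩
    have h1 := hc (left_mem_segment ℝ (-e) e)
    have h2 := hc (right_mem_segment ℝ (-e) e)
    rw [mem_closedBall, dist_eq_norm] at h1 h2
    have h3 : ‖e - (-e)‖ ≤ ‖e - c‖ + ‖(-e) - c‖ := by
      calc ‖e - (-e)‖ = ‖(e - c) - ((-e) - c)‖ := by rw [sub_sub_sub_cancel_right]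
        _ ≤ ‖e - c‖ + ‖(-e) - c‖ := norm_sub_le _ _
    have h4 : ‖e - (-e)‖ = 2 := by
      have h5 : e - (-e) = (2 : ℝ) • e := by
        rw [sub_neg_eq_add, two_smul]
      rw [h5, norm_smul, he]
      norm_num
    linarith

private lemma aux_suppFn_seg (e u : Eucl n) :
    suppFn (segment ℝ (-e) e) u = |(inner ℝ e u : ℝ)| := by
  unfold suppFn
  apply IsGreatest.csSup_eq
  constructor
  · rcases le_or_gt 0 ((inner ℝ e u : ℝ)) with h | h
    · exact ⟨e, right_mem_segment ℝ (-e) e, (abs_of_nonneg h).symm⟩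
    · refine ⟨-e, left_mem_segment ℝ (-e) e, ?_⟩
      show (inner ℝ (-e) u : ℝ) = _
      rw [inner_neg_left, abs_of_neg h]
  · rintro r ⟨x, hx, rfl⟩
    obtain ⟨a, b, ha, hb, hab, rfl⟩ := hx
    show (inner ℝ (a • (-e) + b • e) u : ℝ) ≤ _
    rw [inner_add_left, real_inner_smul_left, real_inner_smul_left, inner_neg_left]
    have h1 : a * -(inner ℝ e u : ℝ) + b * (inner ℝ e u : ℝ) = (b - a) * (inner ℝ e u : ℝ) := by ring
    rw [h1]
    calc (b - a) * (inner ℝ e u : ℝ) ≤ |(b - a) * (inner ℝ e u : ℝ)| := le_abs_self _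
      _ = |b - a| * |(inner ℝ e u : ℝ)| := abs_mul _ _
      _ ≤ 1 * |(inner ℝ e u : ℝ)| := by
          refine mul_le_mul_of_nonneg_right ?_ (abs_nonneg _)
          rw [abs_le]
          constructor <;> linarith
      _ = |(inner ℝ e u : ℝ)| := one_mul _

private lemma aux_abs_max (a b S : ℝ) (ha : |a| ≤ S) (hb : |b| ≤ S) (hab : |a + b| ≤ S) :
    (|b| + |a| + |a + b|) / 2 ≤ S := by
  rcases abs_cases a with ⟨ea, _⟩ | ⟨ea, _⟩ <;> rcases abs_cases b with ⟨eb, _⟩ | ⟨eb, _⟩ <;>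
    rcases abs_cases (a + b) with ⟨ec, _⟩ | ⟨ec, _⟩ <;> linarith

private lemma aux_near_seg (y₁ y₂ y : Eucl n) (hne : y₁ ≠ y₂) :
    ∃ z ∈ segment ℝ y₁ y₂,
      ‖y - z‖ ^ 2 ≤ ((‖y - y₁‖ + ‖y - y₂‖) ^ 2 - ‖y₁ - y₂‖ ^ 2) / 4 := by
  set p := ‖y - y₁‖ with hp
  set q := ‖y - y₂‖ with hq
  set d := ‖y₁ - y₂‖ with hd
  have hp0 : 0 ≤ p := norm_nonneg _
  have hq0 : 0 ≤ q := norm_nonneg _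
  have hd0 : 0 < d := by
    rw [hd]
    exact norm_pos_iff.mpr (sub_ne_zero_of_ne hne)
  have htr2 : p ≤ q + d := by
    rw [hp, hq, hd]
    calc ‖y - y₁‖ = ‖(y - y₂) - (y₁ - y₂)‖ := by rw [sub_sub_sub_cancel_right]
      _ ≤ ‖y - y₂‖ + ‖y₁ - y₂‖ := norm_sub_le _ _
  have htr3 : q ≤ p + d := by
    rw [hp, hq, hd]
    calc ‖y - y₂‖ = ‖(y - y₁) - (y₂ - y₁)‖ := by rw [sub_sub_sub_cancel_right]
      _ ≤ ‖y - y₁‖ + ‖y₂ - y₁‖ := norm_sub_le _ _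
      _ = ‖y - y₁‖ + ‖y₁ - y₂‖ := by rw [norm_sub_rev y₂ y₁]
  have htr1 : d ≤ p + q := by
    rw [hp, hq, hd]
    calc ‖y₁ - y₂‖ = ‖(y - y₂) - (y - y₁)‖ := by rw [sub_sub_sub_cancel_left]
      _ ≤ ‖y - y₂‖ + ‖y - y₁‖ := norm_sub_le _ _
      _ = ‖y - y₁‖ + ‖y - y₂‖ := by ring
  set lam : ℝ := (d + p - q) / (2 * d) with hlam
  refine ⟨y₁ + lam • (y₂ - y₁), ?_, ?_⟩
  · rw [segment_eq_image']
    refine ⟨lam, ⟨?_, ?_⟩, rfl⟩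
    · rw [hlam]
      exact div_nonneg (by linarith) (by linarith)
    · rw [hlam, div_le_one (by linarith)]
      linarith
  · have hyz : y - (y₁ + lam • (y₂ - y₁)) = (y - y₁) - lam • (y₂ - y₁) := by
      rw [sub_add_eq_sub_sub]
    have hinner : (inner ℝ (y - y₁) (y₂ - y₁) : ℝ) = (p ^ 2 + d ^ 2 - q ^ 2) / 2 := by
      have h := norm_sub_sq_real (y - y₁) (y₂ - y₁)
      rw [sub_sub_sub_cancel_right, norm_sub_rev y₂ y₁] at h
      rw [← hp, ← hq, ← hd] at h
      linarith
    have hexp : ‖y - (y₁ + lam • (y₂ - y₁))‖ ^ 2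
        = p ^ 2 - 2 * lam * ((p ^ 2 + d ^ 2 - q ^ 2) / 2) + lam ^ 2 * d ^ 2 := by
      rw [hyz, norm_sub_sq_real, real_inner_smul_right, hinner, norm_smul,
        norm_sub_rev y₂ y₁, ← hp, ← hd, Real.norm_eq_abs, mul_pow, sq_abs]
      ring
    rw [hexp]
    have iden : p ^ 2 - 2 * lam * ((p ^ 2 + d ^ 2 - q ^ 2) / 2) + lam ^ 2 * d ^ 2
        + (p - q) ^ 2 * (p + q - d) / (2 * d) = ((p + q) ^ 2 - d ^ 2) / 4 := by
      rw [hlam]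
      field_simp
      ring
    have hnn : 0 ≤ (p - q) ^ 2 * (p + q - d) / (2 * d) :=
      div_nonneg (mul_nonneg (sq_nonneg _) (by linarith)) (by linarith)
    linarith

private lemma aux_negMP (hd0' : (0:ℝ) ≤ (n:ℝ)-1) :
    MeasurePreserving (fun u : Eucl n => -u)
      ((μH[(n:ℝ)-1]).restrict (sphere (0:Eucl n) 1))
      ((μH[(n:ℝ)-1]).restrict (sphere (0:Eucl n) 1)) := by
  have hisoneg : Isometry (fun u : Eucl n => -u) := isometry_neg
  have hmapH : Measure.map (fun u : Eucl n => -u) μH[(n:ℝ)-1] = μH[(n:ℝ)-1] := by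
    rw [hisoneg.map_hausdorffMeasure (Or.inl hd0'), neg_surjective.range_eq,
      Measure.restrict_univ]
  have hpre : (fun u : Eucl n => -u) ⁻¹' (sphere (0 : Eucl n) 1) = sphere 0 1 := by
    ext x
    simp [mem_sphere, dist_eq_norm]
  refine ⟨measurable_neg, ?_⟩
  calc Measure.map (fun u : Eucl n => -u) ((μH[(n:ℝ)-1]).restrict (sphere (0 : Eucl n) 1))
      = Measure.map (fun u : Eucl n => -u)
          ((μH[(n:ℝ)-1]).restrict ((fun u : Eucl n => -u) ⁻¹' (sphere (0 : Eucl n) 1))) := by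
        rw [hpre]
    _ = (Measure.map (fun u : Eucl n => -u) μH[(n:ℝ)-1]).restrict (sphere (0 : Eucl n) 1) :=
        (Measure.restrict_map measurable_neg isClosed_sphere.measurableSet).symm
    _ = (μH[(n:ℝ)-1]).restrict (sphere (0 : Eucl n) 1) := by rw [hmapH]

end AuxAlmostSegment

set_option maxHeartbeats 1000000 in
/-- Final step in the stability proof: a body with V₁ close to 2R contains a long
segment and stays close to it. -/
theorem almost_segment (n : ℕ) (hn : 2 ≤ n) (c₃ : ℝ) (hc₃ : 0 < c₃)
    (hc₃prop : ∀ K : Set (Eucl n), IsCompact K → Convex ℝ K → K.Nonempty →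
      circumradius K = 1 →
      ∀ η : ℝ, 0 ≤ η → η ≤ 1 → (∀ x ∈ K, ∀ y ∈ K, ‖x - y‖ ≤ 2 - η) →
        2 + c₃ * Real.sqrt η ≤ intrinsicOne K)
    (K : Set (Eucl n)) (hKco : IsCompact K) (hKcv : Convex ℝ K) (hKne : K.Nonempty)
    (hR : circumradius K = 1)
    (ε : ℝ) (hε0 : 0 ≤ ε) (hε : ε ≤ min c₃ (1/2))
    (hV : intrinsicOne K ≤ 2 + ε)
    (y₁ y₂ : Eucl n) (hy₁ : y₁ ∈ K) (hy₂ : y₂ ∈ K)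
    (hlong : ∀ a ∈ K, ∀ b ∈ K, ‖a - b‖ ≤ ‖y₁ - y₂‖) :
    2 - (ε / c₃) ^ 2 ≤ ‖y₁ - y₂‖ ∧
      ∀ y ∈ K, infDist y (segment ℝ y₁ y₂) ≤ Real.sqrt ((3 + 3 * c₃⁻¹ ^ 2) * ε) := by
  classical
  have hvol : 0 < ballVol (n - 1) := aux_ballVol_pos _
  have hεc : ε ≤ c₃ := hε.trans (min_le_left _ _)
  have hεhalf : ε ≤ 1 / 2 := hε.trans (min_le_right _ _)
  set μ : Measure (Eucl n) := (μH[(n:ℝ)-1]).restrict (sphere (0 : Eucl n) 1) with hμ_def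
  have hIK : intrinsicOne K = (ballVol (n - 1))⁻¹ * ∫ u, suppFn K u ∂μ := by
    unfold intrinsicOne
    rw [hμ_def]
  -- basic diameter bounds
  have hd2 : ‖y₁ - y₂‖ ≤ 2 := aux_diam_le hKco hR y₁ hy₁ y₂ hy₂
  have hd1 : 1 ≤ ‖y₁ - y₂‖ := by
    have hmem : ‖y₁ - y₂‖ ∈ {r : ℝ | 0 ≤ r ∧ ∃ c, K ⊆ closedBall c r} := by
      refine ⟨norm_nonneg _, y₁, fun b hb => ?_⟩
      rw [mem_closedBall, dist_eq_norm]
      calc ‖b - y₁‖ = ‖y₁ - b‖ := norm_sub_rev _ _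
        _ ≤ ‖y₁ - y₂‖ := hlong y₁ hy₁ b hb
    have h : circumradius K ≤ ‖y₁ - y₂‖ := by
      unfold circumradius
      exact csInf_le (aux_bddBelow K) hmem
    rw [hR] at h
    exact h
  -- Part 1
  have hprop1 := hc₃prop K hKco hKcv hKne hR (2 - ‖y₁ - y₂‖) (by linarith) (by linarith)
    (fun x hx y hy => by have := hlong x hx y hy; linarith)
  have hsq : Real.sqrt (2 - ‖y₁ - y₂‖) ≤ ε / c₃ := by
    rw [le_div_iff₀ hc₃]
    nlinarith [hprop1, hV]
  have hpart1 : 2 - (ε / c₃) ^ 2 ≤ ‖y₁ - y₂‖ := by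
    have h0 : (0:ℝ) ≤ 2 - ‖y₁ - y₂‖ := by linarith
    have hs2 := Real.sq_sqrt h0
    nlinarith [mul_self_le_mul_self (Real.sqrt_nonneg (2 - ‖y₁ - y₂‖)) hsq, hs2]
  -- integral facts for segments
  have hIseg : ∀ w : Eucl n, Integrable (fun u => |(inner ℝ w u : ℝ)|) μ ∧
      2 * ballVol (n - 1) * ‖w‖ ≤ ∫ u, |(inner ℝ w u : ℝ)| ∂μ := by
    intro w
    rcases eq_or_ne w 0 with rfl | hw
    · constructor
      · have h0 : (fun u : Eucl n => |(inner ℝ (0 : Eucl n) u : ℝ)|) = fun _ => (0:ℝ) := by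
          funext u; simp
        rw [h0]
        exact integrable_zero _ _ _
      · simp
    · set e : Eucl n := ‖w‖⁻¹ • w with he_def
      have hwn : (0:ℝ) < ‖w‖ := norm_pos_iff.mpr hw
      have he : ‖e‖ = 1 := by
        rw [he_def, norm_smul, norm_inv, norm_norm, inv_mul_cancel₀ hwn.ne']
      have hseg_co := aux_isCompact_segment (-e) e
      have hcirc := aux_circum_seg he
      have h2 := hc₃prop (segment ℝ (-e) e) hseg_co (convex_segment _ _)
        ⟨e, right_mem_segment ℝ (-e) e⟩ hcirc 0 le_rfl zero_le_one
        (fun x hx y hy => by simpa using aux_diam_le hseg_co hcirc x hx y hy)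
      rw [Real.sqrt_zero, mul_zero, add_zero] at h2
      have hI : intrinsicOne (segment ℝ (-e) e)
          = (ballVol (n - 1))⁻¹ * ∫ u, |(inner ℝ e u : ℝ)| ∂μ := by
        unfold intrinsicOne
        rw [hμ_def]
        congr 1
        exact integral_congr_ae (Filter.Eventually.of_forall fun u => aux_suppFn_seg e u)
      rw [hI] at h2
      have hint_e : Integrable (fun u => |(inner ℝ e u : ℝ)|) μ := by
        by_contra hni
        rw [integral_undef hni, mul_zero] at h2
        linarith
      have hval_e : 2 * ballVol (n - 1) ≤ ∫ u, |(inner ℝ e u : ℝ)| ∂μ := by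
        have h3 := mul_le_mul_of_nonneg_left h2 hvol.le
        rwa [← mul_assoc, mul_inv_cancel₀ hvol.ne', one_mul, mul_comm] at h3
      have hwe : ∀ u : Eucl n, (inner ℝ w u : ℝ) = ‖w‖ * (inner ℝ e u : ℝ) := by
        intro u
        conv_lhs => rw [show w = ‖w‖ • e by
          rw [he_def, smul_smul, mul_inv_cancel₀ hwn.ne', one_smul]]
        rw [real_inner_smul_left]
      have habs : (fun u : Eucl n => |(inner ℝ w u : ℝ)|)
          = fun u => ‖w‖ * |(inner ℝ e u : ℝ)| := by
        funext u
        rw [hwe u, abs_mul, abs_of_nonneg hwn.le]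
      constructor
      · rw [habs]
        exact hint_e.const_mul _
      · have heq : ∫ u, |(inner ℝ w u : ℝ)| ∂μ = ‖w‖ * ∫ u, |(inner ℝ e u : ℝ)| ∂μ := by
          rw [habs, integral_const_mul]
        rw [heq]
        calc 2 * ballVol (n - 1) * ‖w‖ = ‖w‖ * (2 * ballVol (n - 1)) := by ring
          _ ≤ ‖w‖ * ∫ u, |(inner ℝ e u : ℝ)| ∂μ := mul_le_mul_of_nonneg_left hval_e hwn.le
  -- integral facts for K
  have hK0 := hc₃prop K hKco hKcv hKne hR 0 le_rfl zero_le_one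
    (fun x hx y hy => by simpa using aux_diam_le hKco hR x hx y hy)
  rw [Real.sqrt_zero, mul_zero, add_zero, hIK] at hK0
  have hV' : (ballVol (n - 1))⁻¹ * ∫ u, suppFn K u ∂μ ≤ 2 + ε := by
    rw [← hIK]; exact hV
  have hKint : Integrable (fun u => suppFn K u) μ := by
    by_contra hni
    rw [integral_undef hni, mul_zero] at hK0
    linarith
  have hKub : ∫ u, suppFn K u ∂μ ≤ ballVol (n - 1) * (2 + ε) := by
    have h3 := mul_le_mul_of_nonneg_left hV' hvol.le
    rwa [← mul_assoc, mul_inv_cancel₀ hvol.ne', one_mul] at h3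
  -- negation is measure preserving
  have hd0' : (0:ℝ) ≤ (n:ℝ) - 1 := by
    have h2n : (2:ℝ) ≤ (n:ℝ) := by exact_mod_cast hn
    linarith
  have hmp : MeasurePreserving (fun u : Eucl n => -u) μ μ := by
    rw [hμ_def]
    exact aux_negMP hd0'
  have hembneg : MeasurableEmbedding (fun u : Eucl n => -u) :=
    (Homeomorph.neg (Eucl n)).measurableEmbedding
  have hnegint : ∫ u, suppFn K (-u) ∂μ = ∫ u, suppFn K u ∂μ :=
    hmp.integral_comp hembneg _
  have hnegintg : Integrable (fun u => suppFn K (-u)) μ := by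
    have h := (hmp.integrable_comp_emb (g := fun u => suppFn K u) hembneg).mpr hKint
    exact h
  -- semiperimeter bound
  have hsum : ∀ y ∈ K, ‖y₁ - y₂‖ + ‖y - y₁‖ + ‖y - y₂‖ ≤ 2 * (2 + ε) := by
    intro y hy
    have hbdd : ∀ u : Eucl n, BddAbove ((fun x => (inner ℝ x u : ℝ)) '' K) := fun u =>
      hKco.bddAbove_image ((continuous_id.inner continuous_const).continuousOn)
    have hle : ∀ u : Eucl n, ∀ v ∈ K, (inner ℝ v u : ℝ) ≤ suppFn K u := fun u v hv =>
      le_csSup (hbdd u) ⟨v, hv, rfl⟩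
    have habs : ∀ u : Eucl n, ∀ v ∈ K, ∀ v' ∈ K,
        |(inner ℝ (v - v') u : ℝ)| ≤ suppFn K u + suppFn K (-u) := by
      intro u v hv v' hv'
      have h1 := hle u v hv
      have h2 := hle u v' hv'
      have h3 := hle (-u) v hv
      have h4 := hle (-u) v' hv'
      rw [inner_neg_right] at h3 h4
      rw [inner_sub_left, abs_le]
      constructor <;> linarith
    set g : Eucl n → ℝ := fun u =>
      (|(inner ℝ (y₁ - y₂) u : ℝ)| + |(inner ℝ (y - y₁) u : ℝ)| + |(inner ℝ (y - y₂) u : ℝ)|) / 2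
      with hg_def
    have hgle : ∀ u, g u ≤ suppFn K u + suppFn K (-u) := by
      intro u
      have key : (inner ℝ (y - y₂) u : ℝ) = (inner ℝ (y - y₁) u : ℝ) + (inner ℝ (y₁ - y₂) u : ℝ) := by
        rw [← inner_add_left]
        congr 1
        abel
      have h1 := habs u y₁ hy₁ y₂ hy₂
      have h2 := habs u y hy y₁ hy₁
      have h3 := habs u y hy y₂ hy₂
      rw [key] at h3
      simp only [hg_def]
      rw [key]
      exact aux_abs_max _ _ _ h2 h1 h3
    obtain ⟨hint1, hval1⟩ := hIseg (y₁ - y₂)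
    obtain ⟨hint2, hval2⟩ := hIseg (y - y₁)
    obtain ⟨hint3, hval3⟩ := hIseg (y - y₂)
    have hgint : Integrable g μ := (((hint1.add hint2).add hint3).div_const 2)
    have hsint : Integrable (fun u => suppFn K u + suppFn K (-u)) μ := hKint.add hnegintg
    have hmono := integral_mono hgint hsint hgle
    have hEg : ∫ u, g u ∂μ = ((∫ u, |(inner ℝ (y₁ - y₂) u : ℝ)| ∂μ)
        + (∫ u, |(inner ℝ (y - y₁) u : ℝ)| ∂μ) + ∫ u, |(inner ℝ (y - y₂) u : ℝ)| ∂μ) / 2 := by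
      have hint12 : Integrable
          (fun u : Eucl n => |(inner ℝ (y₁ - y₂) u : ℝ)| + |(inner ℝ (y - y₁) u : ℝ)|) μ :=
        hint1.add hint2
      simp only [hg_def]
      rw [integral_div, integral_add hint12 hint3, integral_add hint1 hint2]
    have hEs : ∫ u, (suppFn K u + suppFn K (-u)) ∂μ = 2 * ∫ u, suppFn K u ∂μ := by
      rw [integral_add hKint hnegintg, hnegint]
      ring
    rw [hEg, hEs] at hmono
    have hfin : ballVol (n - 1) * (‖y₁ - y₂‖ + ‖y - y₁‖ + ‖y - y₂‖)
        ≤ ballVol (n - 1) * (2 * (2 + ε)) := by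
      linarith [hval1, hval2, hval3, hKub, hmono]
    exact le_of_mul_le_mul_left hfin hvol
  refine ⟨hpart1, ?_⟩
  -- Part 2
  intro y hy
  have hne : y₁ ≠ y₂ := by
    intro h
    rw [h, sub_self, norm_zero] at hd1
    linarith
  obtain ⟨z, hzmem, hzle⟩ := aux_near_seg y₁ y₂ y hne
  have hρ : infDist y (segment ℝ y₁ y₂) ≤ ‖y - z‖ := by
    rw [← dist_eq_norm]
    exact infDist_le_dist_of_mem hzmem
  have hδ : (ε / c₃) ^ 2 = ε ^ 2 * c₃⁻¹ ^ 2 := by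
    rw [div_eq_mul_inv, mul_pow]
  have hr2 : (0:ℝ) ≤ c₃⁻¹ ^ 2 := sq_nonneg _
  have h1 := hsum y hy
  have h2 : 2 - ε ^ 2 * c₃⁻¹ ^ 2 ≤ ‖y₁ - y₂‖ := by
    rw [← hδ]
    exact hpart1
  have htr1 : ‖y₁ - y₂‖ ≤ ‖y - y₁‖ + ‖y - y₂‖ := by
    calc ‖y₁ - y₂‖ = ‖(y - y₂) - (y - y₁)‖ := by rw [sub_sub_sub_cancel_left]
      _ ≤ ‖y - y₂‖ + ‖y - y₁‖ := norm_sub_le _ _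
      _ = ‖y - y₁‖ + ‖y - y₂‖ := by ring
  have hM : ‖y - z‖ ^ 2 ≤ (3 + 3 * c₃⁻¹ ^ 2) * ε := by
    have hA : (‖y - y₁‖ + ‖y - y₂‖) - ‖y₁ - y₂‖ ≤ 2 * ε + 2 * (ε ^ 2 * c₃⁻¹ ^ 2) := by
      linarith
    have hB : (‖y - y₁‖ + ‖y - y₂‖) + ‖y₁ - y₂‖ ≤ 5 := by linarith
    have hC : (0:ℝ) ≤ (‖y - y₁‖ + ‖y - y₂‖) + ‖y₁ - y₂‖ := by
      have h5 := norm_nonneg (y - y₁)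
      have h6 := norm_nonneg (y - y₂)
      linarith
    have hD : (0:ℝ) ≤ 2 * ε + 2 * (ε ^ 2 * c₃⁻¹ ^ 2) := by positivity
    have hprod := mul_le_mul hA hB hC hD
    have hee : ε ^ 2 * c₃⁻¹ ^ 2 ≤ (1 / 2) * (ε * c₃⁻¹ ^ 2) := by
      nlinarith [mul_nonneg (mul_nonneg hε0 hr2) (by linarith : (0:ℝ) ≤ 1 / 2 - ε)]
    nlinarith [hzle, hprod, hee, mul_nonneg hε0 hr2]
  calc infDist y (segment ℝ y₁ y₂) ≤ ‖y - z‖ := hρ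
    _ = Real.sqrt (‖y - z‖ ^ 2) := (Real.sqrt_sq (norm_nonneg _)).symm
    _ ≤ Real.sqrt ((3 + 3 * c₃⁻¹ ^ 2) * ε) := Real.sqrt_le_sqrt hM
end
end
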